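/- Let σ₀ > 0, let G be the density of N(0, σ₀²) on ℝ, let U be the uniform density on [0, 2π], and for n ∈ ℕ let f_n(x) = (1 + sin(nx))/(2π) on [0, 2π] (zero elsewhere). Then lim_{n→∞} TV(f_n * G, U * G) = 0; equivalently, lim_{n→∞} ∫_ℝ | ((sin(n·)·1_{[0,2π]}) * G)(x) | dx = 0. -/

import Mathlib

open MeasureTheory Real Filter

/-- One-dimensional convolution. -/
noncomputable def conv1 (f g : ℝ → ℝ) (x : ℝ) : ℝ := ∫ u, f u * g (x - u)

/-- Density of `N(0, σ₀²)` on `ℝ`. -/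
noncomputable def gaussPdf1 (σ₀ : ℝ) (u : ℝ) : ℝ :=
  (Real.sqrt (2 * π * σ₀ ^ 2))⁻¹ * Real.exp (-u ^ 2 / (2 * σ₀ ^ 2))

/-- `f_n(x) = (1 + sin(nx))/(2π)` on `[0, 2π]`, zero elsewhere. -/
noncomputable def pf (n : ℕ) (x : ℝ) : ℝ :=
  Set.indicator (Set.Icc 0 (2 * π)) (fun y => (1 + Real.sin (n * y)) / (2 * π)) x

/-- The uniform density on `[0, 2π]`. -/
noncomputable def unifPdf (x : ℝ) : ℝ :=
  Set.indicator (Set.Icc 0 (2 * π)) (fun _ => 1 / (2 * π)) x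

/-! On `[0, 2π]` the difference `f_n - U` is `sin (n t) / (2π)`. Integrating by parts against
`G (x - t)` with the antiderivative `(1 - cos (n t)) / n`, which vanishes at `0` and at `2π`, moves
the oscillation onto `G'` and gains the factor `1 / n`; Fubini then bounds the `L¹` norm of the
smoothed difference by `2 ‖G'‖₁ / n`. -/

section IntegrationByParts

variable {g : ℝ → ℝ}

theorem integral_sin_mul_comp_sub_eq (hg : Differentiable ℝ g) (hg' : Continuous (deriv g))
    {n : ℕ} (hn : n ≠ 0) (x : ℝ) :
    ∫ t in 0..2 * π, sin (n * t) * g (x - t)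
      = ∫ t in 0..2 * π, (1 - cos (n * t)) / n * deriv g (x - t) := by
  have hu : ∀ t ∈ Set.uIcc 0 (2 * π),
      HasDerivAt (fun t => (1 - cos (n * t)) / n) (sin (n * t)) t := fun t _ =>
    ((((hasDerivAt_id' t).const_mul (n : ℝ)).cos.const_sub 1).div_const (n : ℝ)).congr_deriv
      (by field_simp [Nat.cast_ne_zero.mpr hn])
  have hv : ∀ t ∈ Set.uIcc 0 (2 * π),
      HasDerivAt (fun t => g (x - t)) (-deriv g (x - t)) t := fun t _ =>
    (hg (x - t)).hasDerivAt.comp_const_sub x t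
  have := intervalIntegral.integral_mul_deriv_eq_deriv_mul hu hv
    (Continuous.intervalIntegrable (by fun_prop) _ _)
    (Continuous.intervalIntegrable (by fun_prop) _ _)
  simp only [mul_zero, cos_zero, sub_self, zero_div, zero_mul, cos_nat_mul_two_pi, sub_zero,
    zero_sub, mul_neg, intervalIntegral.integral_neg] at this
  linarith

theorem abs_integral_sin_mul_comp_sub_le (hg : Differentiable ℝ g) (hg' : Continuous (deriv g))
    {n : ℕ} (hn : n ≠ 0) (x : ℝ) :
    |∫ t in 0..2 * π, sin (n * t) * g (x - t)|
      ≤ 2 / n * ∫ t in 0..2 * π, |deriv g (x - t)| := by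
  have h2π : (0 : ℝ) ≤ 2 * π := by positivity
  have hn0 : (0 : ℝ) < n := by positivity
  rw [integral_sin_mul_comp_sub_eq hg hg' hn, ← intervalIntegral.integral_const_mul]
  refine (intervalIntegral.abs_integral_le_integral_abs h2π).trans
    (intervalIntegral.integral_mono_on h2π ?_ ?_ fun t _ => ?_)
  · exact Continuous.intervalIntegrable (by fun_prop) _ _
  · exact Continuous.intervalIntegrable (by fun_prop) _ _
  rw [abs_mul, abs_div, abs_of_pos hn0, div_mul_eq_mul_div, div_mul_eq_mul_div]
  gcongr
  rw [abs_le]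
  constructor <;> linarith [neg_one_le_cos (n * t), cos_le_one (n * t)]

end IntegrationByParts

section Fubini

variable {ψ : ℝ → ℝ} {a b : ℝ}

theorem MeasureTheory.Integrable.comp_sub_prod_restrict_Ioc (hψ : Integrable ψ) :
    Integrable (fun p : ℝ × ℝ => ψ (p.1 - p.2))
      (volume.prod (volume.restrict (Set.Ioc a b))) := by
  simpa using
    (integrable_const (1 : ℝ)).convolution_integrand (ContinuousLinearMap.lsmul ℝ ℝ) hψ

theorem MeasureTheory.Integrable.intervalIntegral_comp_sub (hψ : Integrable ψ) (hab : a ≤ b) :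
    Integrable fun x => ∫ t in a..b, ψ (x - t) := by
  simp_rw [intervalIntegral.integral_of_le hab]
  exact hψ.comp_sub_prod_restrict_Ioc.integral_prod_left

theorem integral_intervalIntegral_comp_sub (hψ : Integrable ψ) (hab : a ≤ b) :
    ∫ x, ∫ t in a..b, ψ (x - t) = (b - a) * ∫ v, ψ v := by
  simp_rw [intervalIntegral.integral_of_le hab]
  rw [integral_integral_swap hψ.comp_sub_prod_restrict_Ioc]
  simp [integral_sub_right_eq_self, hab]

end Fubini

theorem conv1_indicator_Icc (h g : ℝ → ℝ) {a b : ℝ} (hab : a ≤ b) (x : ℝ) :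
    conv1 ((Set.Icc a b).indicator h) g x = ∫ t in a..b, h t * g (x - t) := by
  have hind : ∀ u, (Set.Icc a b).indicator h u * g (x - u)
      = (Set.Icc a b).indicator (fun t => h t * g (x - t)) u := fun u =>
    (Set.indicator_mul_left _ h fun t => g (x - t)).symm
  simp only [conv1, hind]
  rw [integral_indicator measurableSet_Icc, integral_Icc_eq_integral_Ioc,
    intervalIntegral.integral_of_le hab]

theorem conv1_pf_sub_conv1_unifPdf {g : ℝ → ℝ} (hg : Continuous g) (n : ℕ) (x : ℝ) :
    conv1 (pf n) g x - conv1 unifPdf g x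
      = (2 * π)⁻¹ * ∫ t in 0..2 * π, sin (n * t) * g (x - t) := by
  have h2π : (0 : ℝ) ≤ 2 * π := by positivity
  have hpf : conv1 (pf n) g x = ∫ t in 0..2 * π, (1 + sin (n * t)) / (2 * π) * g (x - t) :=
    conv1_indicator_Icc _ g h2π x
  have hunif : conv1 unifPdf g x = ∫ t in 0..2 * π, 1 / (2 * π) * g (x - t) :=
    conv1_indicator_Icc _ g h2π x
  rw [hpf, hunif, ← intervalIntegral.integral_sub, ← intervalIntegral.integral_const_mul]
  · congr 1 with t
    ring
  all_goals exact Continuous.intervalIntegrable (by fun_prop) _ _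

theorem integral_abs_conv1_pf_sub_conv1_unifPdf_le {g : ℝ → ℝ}
    (hg : Differentiable ℝ g) (hg'c : Continuous (deriv g)) (hg'i : Integrable (deriv g))
    {n : ℕ} (hn : n ≠ 0) :
    ∫ x, |conv1 (pf n) g x - conv1 unifPdf g x| ≤ 2 / n * ∫ v, |deriv g v| := by
  have h2π : (0 : ℝ) < 2 * π := by positivity
  have hpointwise : ∀ x, |conv1 (pf n) g x - conv1 unifPdf g x|
      ≤ (2 * π)⁻¹ * (2 / n) * ∫ t in 0..2 * π, |deriv g (x - t)| := fun x => by
    rw [conv1_pf_sub_conv1_unifPdf hg.continuous,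
      abs_mul, abs_of_pos (inv_pos.2 h2π), mul_assoc]
    gcongr
    exact abs_integral_sin_mul_comp_sub_le hg hg'c hn x
  calc ∫ x, |conv1 (pf n) g x - conv1 unifPdf g x|
      ≤ ∫ x, (2 * π)⁻¹ * (2 / n) * ∫ t in 0..2 * π, |deriv g (x - t)| :=
        integral_mono_of_nonneg (.of_forall fun _ => abs_nonneg _)
          ((hg'i.abs.intervalIntegral_comp_sub h2π.le).const_mul _) (.of_forall hpointwise)
    _ = 2 / n * ∫ v, |deriv g v| := by
        rw [integral_const_mul, integral_intervalIntegral_comp_sub hg'i.abs h2π.le, sub_zero]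
        field_simp

section Gaussian

variable {σ₀ : ℝ}

theorem hasDerivAt_gaussPdf1 (σ₀ v : ℝ) :
    HasDerivAt (gaussPdf1 σ₀) (-v / σ₀ ^ 2 * gaussPdf1 σ₀ v) v := by
  refine ((((hasDerivAt_pow 2 v).neg.div_const (2 * σ₀ ^ 2)).exp).const_mul
    (√(2 * π * σ₀ ^ 2))⁻¹).congr_deriv ?_
  simp only [gaussPdf1, Pi.neg_apply]
  ring

theorem differentiable_gaussPdf1 (σ₀ : ℝ) : Differentiable ℝ (gaussPdf1 σ₀) :=
  fun v => (hasDerivAt_gaussPdf1 σ₀ v).differentiableAt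

theorem deriv_gaussPdf1 (σ₀ : ℝ) :
    deriv (gaussPdf1 σ₀) = fun v => -v / σ₀ ^ 2 * gaussPdf1 σ₀ v :=
  funext fun v => (hasDerivAt_gaussPdf1 σ₀ v).deriv

theorem continuous_deriv_gaussPdf1 (σ₀ : ℝ) : Continuous (deriv (gaussPdf1 σ₀)) := by
  rw [deriv_gaussPdf1]
  have := (differentiable_gaussPdf1 σ₀).continuous
  fun_prop

theorem integrable_deriv_gaussPdf1 (hσ₀ : σ₀ ≠ 0) :
    Integrable (deriv (gaussPdf1 σ₀)) := by
  have hb : 0 < (2 * σ₀ ^ 2)⁻¹ := by positivity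
  rw [deriv_gaussPdf1]
  convert (integrable_mul_exp_neg_mul_sq hb).const_mul (-(√(2 * π * σ₀ ^ 2))⁻¹ / σ₀ ^ 2)
    using 2 with v
  simp only [gaussPdf1]
  ring_nf

end Gaussian

/-- After smoothing by a Gaussian of any positive variance, the sequence `f_n`
converges in total variation to the uniform density: `TV(f_n * G, U * G) → 0`. -/
theorem sine_family_smoothed_tv_to_zero (σ₀ : ℝ) (hσ₀ : 0 < σ₀) :
    Tendsto (fun n : ℕ =>
        (1 / 2) * ∫ x, |conv1 (pf n) (gaussPdf1 σ₀) x - conv1 unifPdf (gaussPdf1 σ₀) x|)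
      atTop (nhds 0) := by
  set C := ∫ v, |deriv (gaussPdf1 σ₀) v|
  have hbound : ∀ n : ℕ, n ≠ 0 →
      (1 / 2) * ∫ x, |conv1 (pf n) (gaussPdf1 σ₀) x - conv1 unifPdf (gaussPdf1 σ₀) x|
        ≤ C / n :=
    fun n hn => by
      have := integral_abs_conv1_pf_sub_conv1_unifPdf_le (differentiable_gaussPdf1 σ₀)
        (continuous_deriv_gaussPdf1 σ₀) (integrable_deriv_gaussPdf1 hσ₀.ne') hn
      linarith [show 2 / (n : ℝ) * C = 2 * (C / n) by ring]
  exact squeeze_zero' (.of_forall fun n => by positivity)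
    ((eventually_ne_atTop 0).mono hbound) (tendsto_const_div_atTop_nhds_zero_nat C)
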